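/- If γ satisfies FS0–FS2, then for every event x with Op¹(x) there is no Op⁰ event y with kval(y)=kval(x) and γ(x) <₀ y <₀ x. -/

import Mathlib

/-- Status of an event: 0, 1, or f (failed). -/
inductive Status | s0 | s1 | sf
deriving DecidableEq

open Status

theorem stmt0_general
    (Add Rem : ℕ → Prop) (kval : ℕ → ℕ) (χ : ℕ → Status) (γ : ℕ → ℕ)
    (FS1 : ∀ a, χ a = s1 →
      γ a < a ∧ Add (γ a) ∧ χ (γ a) = s0 ∧ kval a = kval (γ a) ∧
      ¬ ∃ r, Rem r ∧ χ r = s1 ∧ γ r = γ a ∧ γ a < r ∧ r < a)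
    (FS2 : ∀ a b, a < b → Add a → χ a = s0 → χ b = s0 → kval a = kval b →
      ∃ r, a < r ∧ r < b ∧ Rem r ∧ χ r = s1 ∧ γ r = a) :
    ∀ x, χ x = s1 → ¬ ∃ y, χ y = s0 ∧ kval y = kval x ∧ γ x < y ∧ y < x := by
  rintro x hx ⟨y, hy, hky, hγy, hyx⟩
  obtain ⟨-, hAdd, hγ, hkx, hNoRem⟩ := FS1 x hx
  obtain ⟨r, hγr, hry, hRem, hr, hrγ⟩ :=
    FS2 (γ x) y hγy hAdd hγ hy (hkx.symm.trans hky.symm)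
  exact hNoRem ⟨r, hRem, hr, hrγ, hγr, hry.trans hyx⟩

/-- If γ satisfies FS0–FS2, then for every event x with Op¹(x)
there is no Op⁰ event y with kval(y)=kval(x) and γ(x) <₀ y <₀ x.
Events are indexed by natural numbers, ordered by <. -/
theorem stmt0
    (Add Rem Cnt : ℕ → Prop) (kval : ℕ → ℕ) (χ : ℕ → Status) (γ : ℕ → ℕ)
    (FS0 : ∀ e, ¬ (Add e ∧ Rem e) ∧ ¬ (Add e ∧ Cnt e) ∧ ¬ (Rem e ∧ Cnt e))
    (FS1 : ∀ a, χ a = s1 →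
      γ a < a ∧ Add (γ a) ∧ χ (γ a) = s0 ∧ kval a = kval (γ a) ∧
      ¬ ∃ r, Rem r ∧ χ r = s1 ∧ γ r = γ a ∧ γ a < r ∧ r < a)
    (FS2 : ∀ a b, a < b → Add a → χ a = s0 → χ b = s0 → kval a = kval b →
      ∃ r, a < r ∧ r < b ∧ Rem r ∧ χ r = s1 ∧ γ r = a) :
    ∀ x, χ x = s1 → ¬ ∃ y, χ y = s0 ∧ kval y = kval x ∧ γ x < y ∧ y < x :=
  stmt0_general Add Rem kval χ γ FS1 FS2
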